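/- Reeb stability: for continuous f₁, f₂ : X → ℝ, the interleaving distance between the Reeb precosheaves of the Reeb graphs Rb(X,f₁) and Rb(X,f₂) is at most ‖f₁ − f₂‖_∞. -/

import Mathlib

open CategoryTheory Set
open scoped NNReal ENNReal

/-- The Reeb relation of `f : X → ℝ`: `x ∼_f y` iff `y` lies in the connected
component of `x` inside the level set `f ⁻¹' {f x}`. -/
def ReebRel {X : Type*} [TopologicalSpace X] (f : X → ℝ) (x y : X) : Prop :=
  y ∈ connectedComponentIn (f ⁻¹' {f x}) x

theorem ReebRel.apply_eq {X : Type*} [TopologicalSpace X] {f : X → ℝ} {x y : X}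
    (h : ReebRel f x y) : f x = f y :=
  (show f y = f x from connectedComponentIn_subset (f ⁻¹' {f x}) x h).symm

/-- The function induced by `f` on the Reeb quotient. -/
def reebTilde {X : Type*} [TopologicalSpace X] (f : X → ℝ) : Quot (ReebRel f) → ℝ :=
  Quot.lift f fun _ _ h => h.apply_eq

/-- The poset of nonempty open intervals `(a, b)` of `ℝ`, ordered by inclusion. -/
def RInt : Type := {p : ℝ × ℝ // p.1 < p.2}

namespace RInt

instance : Preorder RInt where
  le I J := J.1.1 ≤ I.1.1 ∧ I.1.2 ≤ J.1.2
  le_refl I := ⟨le_refl _, le_refl _⟩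
  le_trans I J K h h' := ⟨h'.1.trans h.1, h.2.trans h'.2⟩

/-- The underlying open interval `(a, b) ⊆ ℝ`. -/
def set (I : RInt) : Set ℝ := Set.Ioo I.1.1 I.1.2

theorem set_mono {I J : RInt} (h : I ≤ J) : I.set ⊆ J.set :=
  Set.Ioo_subset_Ioo h.1 h.2

/-- The `δ`-thickening `(a - δ, b + δ)` of the open interval `(a, b)`. -/
def widen (δ : ℝ≥0) (I : RInt) : RInt :=
  ⟨(I.1.1 - δ, I.1.2 + δ), by
    have h := I.2
    have h0 : (0 : ℝ) ≤ δ := δ.2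
    dsimp only
    linarith⟩

theorem widen_mono (δ : ℝ≥0) : Monotone (widen δ) := by
  intro I J h
  exact ⟨by dsimp [widen]; linarith [h.1], by dsimp [widen]; linarith [h.2]⟩

theorem le_widen (δ : ℝ≥0) (I : RInt) : I ≤ widen δ I := by
  have h0 : (0 : ℝ) ≤ δ := δ.2
  exact ⟨by dsimp [widen]; linarith, by dsimp [widen]; linarith⟩

end RInt

/-- The widening functor `ω_δ` sending `(a, b)` to `(a - δ, b + δ)`. -/
def widenFunctor (δ : ℝ≥0) : RInt ⥤ RInt := (RInt.widen_mono δ).functor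

/-- Two functors `C, D : Int ⥤ 𝒜` are `δ`-interleaved if there are natural
transformations `Φ : C ⟶ D ∘ ω_δ` and `Ψ : D ⟶ C ∘ ω_δ` whose composites are
the maps induced by the inclusions `I ⊆ ω_δ (ω_δ I) = ω_{2δ} I`. -/
def IsInterleaving {A : Type*} [Category A] (δ : ℝ≥0) (C D : RInt ⥤ A) : Prop :=
  ∃ (Φ : C ⟶ widenFunctor δ ⋙ D) (Ψ : D ⟶ widenFunctor δ ⋙ C),
    (∀ I : RInt, Φ.app I ≫ Ψ.app ((widenFunctor δ).obj I) =
      C.map (homOfLE ((RInt.le_widen δ I).trans (RInt.le_widen δ (RInt.widen δ I))))) ∧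
    (∀ I : RInt, Ψ.app I ≫ Φ.app ((widenFunctor δ).obj I) =
      D.map (homOfLE ((RInt.le_widen δ I).trans (RInt.le_widen δ (RInt.widen δ I)))))

/-- The interleaving distance between two functors on the poset of open intervals. -/
noncomputable def interleavingDist {A : Type*} [Category A] (C D : RInt ⥤ A) : ℝ≥0∞ :=
  ⨅ (δ : ℝ≥0) (_ : IsInterleaving δ C D), (δ : ℝ≥0∞)

/-- The Reeb precosheaf `𝒟(X, f)`, sending an open interval `I` to the set of
connected components of `f ⁻¹' I`, with maps induced by inclusions. -/
def reebPrecosheaf {X : Type u} [TopologicalSpace X] (f : X → ℝ) : RInt ⥤ Type u where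
  obj I := ConnectedComponents ↥(f ⁻¹' I.set)
  map {I J} h :=
    TypeCat.ofHom
      (continuous_inclusion (Set.preimage_mono (RInt.set_mono h.le))).connectedComponentsMap
  map_id I := by
    ext c
    obtain ⟨x, rfl⟩ := ConnectedComponents.surjective_coe c
    rfl
  map_comp {I J K} h h' := by
    ext c
    obtain ⟨x, rfl⟩ := ConnectedComponents.surjective_coe c
    rfl

/-!
For continuous `f`, the Reeb quotient map `X → Rb(X, f)` restricts over an open set `f ⁻¹' S`
to a quotient map whose fibres are connected (each lies in a component of a level set), so it
induces a bijection between the connected components upstairs and downstairs, naturally in `S`.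
Hence `𝒟(Rb(X, f), f̃) ≅ 𝒟(X, f)`. On `X` itself, `|f₁ - f₂| ≤ δ` gives
`f₁ ⁻¹' I ⊆ f₂ ⁻¹' ω_δ I` and symmetrically, and the induced maps of components are a
`δ`-interleaving; interleavings transfer along natural isomorphisms.
-/

section Interleaving

variable {A : Type*} [Category A] {δ : ℝ≥0} {C C' D D' : RInt ⥤ A}

theorem IsInterleaving.of_iso (eC : C ≅ C') (eD : D ≅ D') (h : IsInterleaving δ C D) :
    IsInterleaving δ C' D' := by
  obtain ⟨Φ, Ψ, hΦΨ, hΨΦ⟩ := h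
  refine ⟨eC.inv ≫ Φ ≫ Functor.whiskerLeft _ eD.hom,
    eD.inv ≫ Ψ ≫ Functor.whiskerLeft _ eC.hom, fun I => ?_, fun I => ?_⟩
  · simp only [NatTrans.comp_app, Functor.whiskerLeft_app, Category.assoc,
      Iso.hom_inv_id_app_assoc, reassoc_of% (hΦΨ I)]
    erw [eC.hom.naturality, Iso.inv_hom_id_app_assoc]
  · simp only [NatTrans.comp_app, Functor.whiskerLeft_app, Category.assoc,
      Iso.hom_inv_id_app_assoc, reassoc_of% (hΨΦ I)]
    erw [eD.hom.naturality, Iso.inv_hom_id_app_assoc]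

theorem interleavingDist_le_of_forall {S : ℝ≥0∞}
    (h : ∀ δ : ℝ≥0, S ≤ δ → IsInterleaving δ C D) : interleavingDist C D ≤ S := by
  rcases eq_top_or_lt_top S with rfl | hS
  · exact le_top
  · have hδ := ENNReal.coe_toNNReal hS.ne
    rw [← hδ]
    exact iInf₂_le (f := fun δ (_ : IsInterleaving δ C D) => (δ : ℝ≥0∞)) _ (h _ hδ.ge)

end Interleaving

section ReebQuotient

variable {X : Type*} [TopologicalSpace X] {f : X → ℝ}

theorem reebRel_equivalence (f : X → ℝ) : Equivalence (ReebRel f) where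
  refl x := mem_connectedComponentIn rfl
  symm {x y} h := by
    have hxy : f x = f y := h.apply_eq
    unfold ReebRel at *
    rw [← hxy, ← connectedComponentIn_eq h]
    exact mem_connectedComponentIn rfl
  trans {x y z} h1 h2 := by
    have hxy : f x = f y := h1.apply_eq
    unfold ReebRel at *
    rw [← hxy] at h2
    rwa [← connectedComponentIn_eq h1] at h2

theorem ReebRel.of_mk_eq {x y : X} (h : Quot.mk (ReebRel f) x = Quot.mk (ReebRel f) y) :
    ReebRel f x y :=
  (reebRel_equivalence f).eqvGen_iff.mp (Quot.eqvGen_exact h)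

theorem ReebRel.connectedComponentsMk_eq {S : Set ℝ} {x y : X} (h : ReebRel f x y)
    (hx : x ∈ f ⁻¹' S) (hy : y ∈ f ⁻¹' S) :
    (ConnectedComponents.mk ⟨x, hx⟩ : ConnectedComponents (f ⁻¹' S)) =
      ConnectedComponents.mk ⟨y, hy⟩ := by
  have hlevel : connectedComponentIn (f ⁻¹' {f x}) x ⊆ f ⁻¹' S := by
    intro z hz
    have hz' : f z = f x := connectedComponentIn_subset (f ⁻¹' {f x}) x hz
    simpa [Set.mem_preimage, hz'] using hx
  have hmem : y ∈ connectedComponentIn (f ⁻¹' S) x :=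
    isPreconnected_connectedComponentIn.subset_connectedComponentIn
      (mem_connectedComponentIn (show x ∈ f ⁻¹' {f x} from rfl)) hlevel h
  rw [connectedComponentIn_eq_image hx] at hmem
  obtain ⟨z, hz, hzy⟩ := hmem
  rw [show z = ⟨y, hy⟩ from Subtype.ext hzy] at hz
  exact ConnectedComponents.coe_eq_coe.mpr (connectedComponent_eq hz)

theorem continuous_reebTilde (hf : Continuous f) : Continuous (reebTilde f) :=
  continuous_quot_lift _ hf

def reebRestrict (f : X → ℝ) (S : Set ℝ) : C(f ⁻¹' S, reebTilde f ⁻¹' S) :=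
  ⟨(reebTilde f ⁻¹' S).restrictPreimage (Quot.mk _), continuous_quot_mk.restrictPreimage⟩

theorem isQuotientMap_reebRestrict (hf : Continuous f) {S : Set ℝ} (hS : IsOpen S) :
    Topology.IsQuotientMap (reebRestrict f S) :=
  isQuotientMap_quot_mk.restrictPreimage_isOpen (hS.preimage (continuous_reebTilde hf))

noncomputable def reebComponentsEquiv (hf : Continuous f) {S : Set ℝ} (hS : IsOpen S) :
    ConnectedComponents (f ⁻¹' S) ≃ ConnectedComponents (reebTilde f ⁻¹' S) :=
  let hq := isQuotientMap_reebRestrict hf hS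
  let mk : C(f ⁻¹' S, ConnectedComponents (f ⁻¹' S)) := ⟨(↑), ConnectedComponents.continuous_coe⟩
  have hmk : Function.FactorsThrough mk (reebRestrict f S) := fun z z' h =>
    (ReebRel.of_mk_eq (congrArg Subtype.val h)).connectedComponentsMk_eq z.2 z'.2
  { toFun := hq.continuous.connectedComponentsMap
    invFun := (hq.lift mk hmk).continuous.connectedComponentsLift
    left_inv := fun c => by
      obtain ⟨z, rfl⟩ := ConnectedComponents.surjective_coe c
      exact DFunLike.congr_fun (hq.lift_comp mk hmk) z
    right_inv := fun c => by
      obtain ⟨w, rfl⟩ := ConnectedComponents.surjective_coe c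
      obtain ⟨z, rfl⟩ := hq.surjective w
      exact congrArg hq.continuous.connectedComponentsMap
        (DFunLike.congr_fun (hq.lift_comp mk hmk) z) }

noncomputable def reebPrecosheafIso (hf : Continuous f) :
    reebPrecosheaf f ≅ reebPrecosheaf (reebTilde f) :=
  NatIso.ofComponents (fun _ => (reebComponentsEquiv hf isOpen_Ioo).toIso) fun _ => by
    ext c
    obtain ⟨x, rfl⟩ := ConnectedComponents.surjective_coe c
    rfl

end ReebQuotient

theorem preimage_subset_preimage_widen {X : Type*} {f g : X → ℝ} {δ : ℝ≥0}
    (hd : ∀ x, |f x - g x| ≤ δ) (I : RInt) : f ⁻¹' I.set ⊆ g ⁻¹' (RInt.widen δ I).set := by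
  intro x ⟨hl, hr⟩
  have := abs_le.mp (hd x)
  constructor <;> simp only [RInt.widen] <;> linarith

section ReebPrecosheaf

variable {X : Type*} [TopologicalSpace X]

def reebPrecosheafWiden {f g : X → ℝ} {δ : ℝ≥0} (hd : ∀ x, |f x - g x| ≤ δ) :
    reebPrecosheaf f ⟶ widenFunctor δ ⋙ reebPrecosheaf g where
  app I := TypeCat.ofHom
    (continuous_inclusion (preimage_subset_preimage_widen hd I)).connectedComponentsMap
  naturality I J h := by
    ext c
    obtain ⟨x, rfl⟩ := ConnectedComponents.surjective_coe c
    rfl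

theorem isInterleaving_reebPrecosheaf {f g : X → ℝ} {δ : ℝ≥0} (hd : ∀ x, |f x - g x| ≤ δ) :
    IsInterleaving δ (reebPrecosheaf f) (reebPrecosheaf g) := by
  have hd' : ∀ x, |g x - f x| ≤ δ := fun x => abs_sub_comm (g x) (f x) ▸ hd x
  refine ⟨reebPrecosheafWiden hd, reebPrecosheafWiden hd', fun I => ?_, fun I => ?_⟩ <;>
  · ext c
    obtain ⟨x, rfl⟩ := ConnectedComponents.surjective_coe c
    rfl

end ReebPrecosheaf

theorem stmt13 {X : Type u} [TopologicalSpace X]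
    (f₁ f₂ : X → ℝ) (hf₁ : Continuous f₁) (hf₂ : Continuous f₂) :
    interleavingDist (reebPrecosheaf (reebTilde f₁)) (reebPrecosheaf (reebTilde f₂)) ≤
      ⨆ x : X, ENNReal.ofReal |f₁ x - f₂ x| := by
  refine interleavingDist_le_of_forall fun δ hδ => ?_
  have hd : ∀ x, |f₁ x - f₂ x| ≤ δ := fun x =>
    (ENNReal.ofReal_le_iff_le_toReal ENNReal.coe_ne_top).mp ((le_iSup _ x).trans hδ)
  exact (isInterleaving_reebPrecosheaf hd).of_iso (reebPrecosheafIso hf₁) (reebPrecosheafIso hf₂)
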